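/- arXiv:math/0602189 — 2 statements merged into one kernel-verified Lean document; each statement's English description precedes it below -/
import Mathlib

section
/- Let k be a field of odd characteristic and g ∈ k× a non-square. Let K₁ be the class-2 quotient of L/⟨x₁₃, x₁₄, x₂₃, x₂₄⟩ where L is the free Lie algebra on x₁,…,x₄ over k. Then K₁ contains a nonzero element whose centralizer in K₁ has k-dimension 5. -/
/-!
The relations say that `x₁, x₂` commute with `x₃, x₄`. In the class-2 quotient `K₁` the pairs
`x₁, x₂` and `x₃, x₄` therefore generate two commuting copies of (quotients of) the
three-dimensional Heisenberg algebra `𝔥`, which gives a Lie map `𝔥 × 𝔥 → K₁`. Conversely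
`𝔥 × 𝔥` has class 2 and satisfies the relations, so the universal property of the free Lie
algebra gives an inverse `K₁ → 𝔥 × 𝔥`. In `𝔥 × 𝔥` the centralizer of the image `(X, 0)` of `x₁`
is cut out by the single linear condition that the `Y`-coordinate of the first factor vanishes,
so it has dimension `6 - 1 = 5`.
-/

open FreeLieAlgebra

/-- Coordinates with respect to `X`, `Y` and the central element `⁅X, Y⁆`. -/
def Heisenberg (R : Type*) := Fin 3 → R

namespace Heisenberg

variable {R : Type*} [CommRing R]

instance : AddCommGroup (Heisenberg R) := inferInstanceAs (AddCommGroup (Fin 3 → R))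
instance : Module R (Heisenberg R) := inferInstanceAs (Module R (Fin 3 → R))
instance : Module.Finite R (Heisenberg R) := inferInstanceAs (Module.Finite R (Fin 3 → R))

@[simp] lemma zero_apply (i : Fin 3) : (0 : Heisenberg R) i = 0 := rfl
@[simp] lemma add_apply (u v : Heisenberg R) (i : Fin 3) : (u + v) i = u i + v i := rfl
@[simp] lemma smul_apply (c : R) (u : Heisenberg R) (i : Fin 3) : (c • u) i = c * u i := rfl

instance : Bracket (Heisenberg R) (Heisenberg R) where
  bracket u v i := if i = 2 then u 0 * v 1 - u 1 * v 0 else 0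

@[simp] lemma lie_apply (u v : Heisenberg R) (i : Fin 3) :
    ⁅u, v⁆ i = if i = 2 then u 0 * v 1 - u 1 * v 0 else 0 := rfl

instance : LieRing (Heisenberg R) where
  add_lie u v w := by funext i; fin_cases i <;> simp; ring
  lie_add u v w := by funext i; fin_cases i <;> simp; ring
  lie_self u := by funext i; fin_cases i <;> simp; ring
  leibniz_lie u v w := by funext i; fin_cases i <;> simp

instance : LieAlgebra R (Heisenberg R) where
  lie_smul c u v := by funext i; fin_cases i <;> simp; ring

def X : Heisenberg R := fun i => if i = 0 then 1 else 0

def Y : Heisenberg R := fun i => if i = 1 then 1 else 0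

lemma X_ne_zero [Nontrivial R] : (X : Heisenberg R) ≠ 0 :=
  fun h => one_ne_zero (congrFun h 0)

lemma eq_smul_X_add_smul_Y_add_smul_lie (u : Heisenberg R) :
    u = u 0 • X + u 1 • Y + u 2 • ⁅(X : Heisenberg R), Y⁆ := by
  funext i; fin_cases i <;> simp [X, Y]

lemma lie_X_eq_zero_iff (u : Heisenberg R) : ⁅(X : Heisenberg R), u⁆ = 0 ↔ u 1 = 0 := by
  constructor
  · intro h; simpa [X] using congrFun h 2
  · intro h; funext i; fin_cases i <;> simp [X, h]

lemma lie_lie_eq_zero (u v w : Heisenberg R) : ⁅u, ⁅v, w⁆⁆ = 0 := by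
  funext i; fin_cases i <;> simp

lemma finrank_eq [StrongRankCondition R] : Module.finrank R (Heisenberg R) = 3 :=
  Module.finrank_fin_fun R

variable {L : Type*} [LieRing L] [LieAlgebra R L]

lemma hom_ext {f g : Heisenberg R →ₗ⁅R⁆ L} (hX : f X = g X) (hY : f Y = g Y) : f = g := by
  ext u
  rw [eq_smul_X_add_smul_Y_add_smul_lie u]
  simp only [map_add, map_smul, LieHom.map_lie, hX, hY]

variable (R) in
def lift (a b : L) (ha : ⁅a, ⁅a, b⁆⁆ = 0) (hb : ⁅b, ⁅a, b⁆⁆ = 0) : Heisenberg R →ₗ⁅R⁆ L where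
  toFun u := u 0 • a + u 1 • b + u 2 • ⁅a, b⁆
  map_add' u v := by simp only [add_apply, add_smul]; abel
  map_smul' c u := by simp only [smul_apply, mul_smul, RingHom.id_apply, smul_add]
  map_lie' {u v} := by
    have ha' : ⁅⁅a, b⁆, a⁆ = 0 := by rw [← lie_skew, ha, neg_zero]
    have hb' : ⁅⁅a, b⁆, b⁆ = 0 := by rw [← lie_skew, hb, neg_zero]
    simp only [lie_apply, add_lie, lie_add, smul_lie, lie_smul, lie_self, ha, hb, ha', hb',
      smul_zero, add_zero, zero_add]
    rw [← lie_skew b a]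
    simp only [Fin.reduceEq, ↓reduceIte, zero_smul, zero_add]
    module

@[simp] lemma lift_X (a b : L) (ha hb) : lift R a b ha hb X = a := by
  simp [lift, X]

@[simp] lemma lift_Y (a b : L) (ha hb) : lift R a b ha hb Y = b := by
  simp [lift, Y]

lemma lift_lie_lift_eq_zero {a b c d : L} (ha hb hc hd) (hac : ⁅a, c⁆ = 0) (had : ⁅a, d⁆ = 0)
    (hbc : ⁅b, c⁆ = 0) (hbd : ⁅b, d⁆ = 0) (u v : Heisenberg R) :
    ⁅lift R a b ha hb u, lift R c d hc hd v⁆ = 0 := by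
  have hcd {x : L} (hxc : ⁅x, c⁆ = 0) (hxd : ⁅x, d⁆ = 0) : ⁅x, ⁅c, d⁆⁆ = 0 := by
    rw [leibniz_lie, hxc, hxd, zero_lie, lie_zero, add_zero]
  have hab {y : L} (hay : ⁅a, y⁆ = 0) (hby : ⁅b, y⁆ = 0) : ⁅⁅a, b⁆, y⁆ = 0 := by
    rw [_root_.lie_lie, hay, hby, lie_zero, lie_zero, sub_zero]
  simp [lift, hac, had, hbc, hbd, hcd hac had, hcd hbc hbd, hab hac hbc, hab had hbd,
    hab (hcd hac had) (hcd hbc hbd)]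

lemma finrank_ker_ad_inl_X (k : Type*) [Field k] :
    Module.finrank k (LinearMap.ker (LieAlgebra.ad k (Heisenberg k × Heisenberg k) (X, 0))) =
      5 := by
  let f : Heisenberg k × Heisenberg k →ₗ[k] k :=
    (LinearMap.proj 1).comp (LinearMap.fst k (Heisenberg k) (Heisenberg k))
  have hker : LinearMap.ker (LieAlgebra.ad k _ (X, 0)) = LinearMap.ker f := by
    ext ⟨u, w⟩
    simp only [LinearMap.mem_ker, LieAlgebra.ad_apply, LieAlgebra.Prod.bracket_apply, zero_lie,
      Prod.mk_eq_zero, lie_X_eq_zero_iff, and_true]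
    exact Iff.rfl
  have hrange : LinearMap.range f = ⊤ :=
    LinearMap.range_eq_top.mpr fun c => ⟨(fun _ => c, 0), rfl⟩
  have := f.finrank_range_add_finrank_ker
  rw [hrange, finrank_top, Module.finrank_self, Module.finrank_prod, finrank_eq] at this
  rw [hker]
  omega

end Heisenberg

section Lie

variable {R L₁ L₂ L : Type*} [CommRing R] [LieRing L₁] [LieAlgebra R L₁]
  [LieRing L₂] [LieAlgebra R L₂] [LieRing L] [LieAlgebra R L]

def LieHom.coprod (f : L₁ →ₗ⁅R⁆ L) (g : L₂ →ₗ⁅R⁆ L) (h : ∀ x y, ⁅f x, g y⁆ = 0) :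
    L₁ × L₂ →ₗ⁅R⁆ L where
  toLinearMap := f.toLinearMap.coprod g.toLinearMap
  map_lie' {x y} := by
    have h' : ∀ x y, ⁅g y, f x⁆ = 0 := fun x y => by rw [← lie_skew, h, neg_zero]
    simp [h, h']

@[simp] lemma LieHom.coprod_apply (f : L₁ →ₗ⁅R⁆ L) (g : L₂ →ₗ⁅R⁆ L)
    (h : ∀ x y, ⁅f x, g y⁆ = 0) (x : L₁) (y : L₂) :
    LieHom.coprod f g h (x, y) = f x + g y := rfl

lemma LieEquiv.finrank_ker_ad (e : L₁ ≃ₗ⁅R⁆ L₂) (x : L₁) :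
    Module.finrank R (LinearMap.ker (LieAlgebra.ad R L₂ (e x))) =
      Module.finrank R (LinearMap.ker (LieAlgebra.ad R L₁ x)) := by
  have h : LinearMap.ker (LieAlgebra.ad R L₂ (e x)) =
      (LinearMap.ker (LieAlgebra.ad R L₁ x)).map (e.toLinearEquiv : L₁ →ₗ[R] L₂) := by
    ext y
    rw [Submodule.mem_map_equiv, LinearMap.mem_ker, LinearMap.mem_ker, LieAlgebra.ad_apply,
      LieAlgebra.ad_apply]
    conv_lhs => rw [← e.apply_symm_apply y, ← LieEquiv.map_lie]
    exact map_eq_zero_iff e e.injective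
  rw [h, LinearEquiv.finrank_map_eq]

namespace LieIdeal

def mkQ (I : LieIdeal R L₁) : L₁ →ₗ⁅R⁆ L₁ ⧸ I :=
  { (LieSubmodule.Quotient.mk' I : L₁ →ₗ[R] L₁ ⧸ I) with map_lie' := rfl }

lemma mkQ_surjective (I : LieIdeal R L₁) : Function.Surjective (mkQ I) :=
  LieSubmodule.Quotient.surjective_mk' I

lemma mkQ_eq_zero {I : LieIdeal R L₁} {x : L₁} (hx : x ∈ I) : mkQ I x = 0 :=
  (LieSubmodule.Quotient.mk_eq_zero _).mpr hx

def liftQ (I : LieIdeal R L₁) (f : L₁ →ₗ⁅R⁆ L₂) (h : I ≤ f.ker) : L₁ ⧸ I →ₗ⁅R⁆ L₂ :=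
  { I.toSubmodule.liftQ f.toLinearMap h with
    map_lie' := by
      rintro ⟨x⟩ ⟨y⟩
      exact f.map_lie x y }

end LieIdeal

open LieModule

lemma lowerCentralSeries_two_eq_bot_of_lie_lie (h : ∀ x y z : L, ⁅x, ⁅y, z⁆⁆ = 0) :
    lowerCentralSeries R L L 2 = ⊥ := by
  have hcentral : lowerCentralSeries R L L 1 ≤ maxTrivSubmodule R L L := by
    rw [lowerCentralSeries_succ, lowerCentralSeries_zero, LieSubmodule.lie_le_iff]
    exact fun y _ z _ => (mem_maxTrivSubmodule R L L _).mpr fun x => h x y z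
  rw [lowerCentralSeries_succ, LieSubmodule.lie_eq_bot_iff]
  exact fun x _ m hm => (mem_maxTrivSubmodule R L L m).mp (hcentral hm) x

lemma lowerCentralSeries_two_le_ker (f : L₁ →ₗ⁅R⁆ L) (h : ∀ x y z : L, ⁅x, ⁅y, z⁆⁆ = 0) :
    lowerCentralSeries R L₁ L₁ 2 ≤ f.ker := by
  rw [← LieIdeal.map_eq_bot_iff, eq_bot_iff, ← lowerCentralSeries_two_eq_bot_of_lie_lie h]
  exact LieIdeal.map_lowerCentralSeries_le 2

lemma lie_lie_eq_zero_of_lowerCentralSeries_two (x y z : L ⧸ lowerCentralSeries R L L 2) :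
    ⁅x, ⁅y, z⁆⁆ = 0 := by
  obtain ⟨x, rfl⟩ := LieIdeal.mkQ_surjective _ x
  obtain ⟨y, rfl⟩ := LieIdeal.mkQ_surjective _ y
  obtain ⟨z, rfl⟩ := LieIdeal.mkQ_surjective _ z
  rw [← LieHom.map_lie, ← LieHom.map_lie]
  refine LieIdeal.mkQ_eq_zero ?_
  rw [lowerCentralSeries_succ, lowerCentralSeries_succ, lowerCentralSeries_zero]
  exact LieSubmodule.lie_mem_lie (LieSubmodule.mem_top x)
    (LieSubmodule.lie_mem_lie (LieSubmodule.mem_top y) (LieSubmodule.mem_top z))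

end Lie

section K₁

open LieModule Heisenberg

variable (R : Type*) [CommRing R]

noncomputable def rel₁ : LieIdeal R (FreeLieAlgebra R (Fin 4)) :=
  LieSubmodule.lieSpan R (FreeLieAlgebra R (Fin 4))
    {⁅of R (0 : Fin 4), of R 2⁆, ⁅of R (0 : Fin 4), of R 3⁆, ⁅of R (1 : Fin 4), of R 2⁆,
      ⁅of R (1 : Fin 4), of R 3⁆}

abbrev A₁ := FreeLieAlgebra R (Fin 4) ⧸ rel₁ R

abbrev K₁ := A₁ R ⧸ lowerCentralSeries R (A₁ R) (A₁ R) 2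

noncomputable def π₁ : FreeLieAlgebra R (Fin 4) →ₗ⁅R⁆ K₁ R :=
  (LieIdeal.mkQ _).comp (LieIdeal.mkQ (rel₁ R))

lemma π₁_surjective : Function.Surjective (π₁ R) :=
  (LieIdeal.mkQ_surjective _).comp (LieIdeal.mkQ_surjective _)

variable {R} in
lemma lie_π₁_of_eq_zero {i j : Fin 4} (hi : i < 2) (hj : 2 ≤ j) :
    ⁅π₁ R (of R i), π₁ R (of R j)⁆ = 0 := by
  have h : ⁅of R i, of R j⁆ ∈ rel₁ R := by
    apply LieSubmodule.subset_lieSpan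
    fin_cases i <;> fin_cases j <;> simp_all
  rw [← LieHom.map_lie, π₁, LieHom.comp_apply, LieIdeal.mkQ_eq_zero h, map_zero]

noncomputable def heisenbergGens : Fin 4 → Heisenberg R × Heisenberg R :=
  ![(X, 0), (Y, 0), (0, X), (0, Y)]

lemma rel₁_le_ker : rel₁ R ≤ (FreeLieAlgebra.lift R (heisenbergGens R)).ker := by
  rw [rel₁, LieSubmodule.lieSpan_le]
  rintro _ (rfl | rfl | rfl | rfl) <;> simp [heisenbergGens]

noncomputable def toHeisenbergProd : K₁ R →ₗ⁅R⁆ Heisenberg R × Heisenberg R :=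
  LieIdeal.liftQ _ (LieIdeal.liftQ (rel₁ R) _ (rel₁_le_ker R)) <|
    lowerCentralSeries_two_le_ker _ fun _ _ _ => by simp [lie_lie_eq_zero]

lemma toHeisenbergProd_π₁_of (i : Fin 4) :
    toHeisenbergProd R (π₁ R (of R i)) = heisenbergGens R i :=
  FreeLieAlgebra.lift_of_apply _ i

noncomputable def ofHeisenbergProd : Heisenberg R × Heisenberg R →ₗ⁅R⁆ K₁ R :=
  LieHom.coprod
    (lift R (π₁ R (of R 0)) (π₁ R (of R 1)) (lie_lie_eq_zero_of_lowerCentralSeries_two _ _ _)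
      (lie_lie_eq_zero_of_lowerCentralSeries_two _ _ _))
    (lift R (π₁ R (of R 2)) (π₁ R (of R 3)) (lie_lie_eq_zero_of_lowerCentralSeries_two _ _ _)
      (lie_lie_eq_zero_of_lowerCentralSeries_two _ _ _))
    (lift_lie_lift_eq_zero _ _ _ _ (lie_π₁_of_eq_zero (by decide) (by decide))
      (lie_π₁_of_eq_zero (by decide) (by decide)) (lie_π₁_of_eq_zero (by decide) (by decide))
      (lie_π₁_of_eq_zero (by decide) (by decide)))

lemma ofHeisenbergProd_comp_toHeisenbergProd :
    (ofHeisenbergProd R).comp (toHeisenbergProd R) = LieHom.id := by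
  suffices h : ((ofHeisenbergProd R).comp (toHeisenbergProd R)).comp (π₁ R) = π₁ R by
    ext y
    obtain ⟨a, rfl⟩ := π₁_surjective R y
    exact LieHom.congr_fun h a
  refine FreeLieAlgebra.hom_ext fun i => ?_
  rw [LieHom.comp_apply, LieHom.comp_apply, toHeisenbergProd_π₁_of]
  fin_cases i <;> simp [heisenbergGens, ofHeisenbergProd]

lemma toHeisenbergProd_comp_ofHeisenbergProd :
    (toHeisenbergProd R).comp (ofHeisenbergProd R) = LieHom.id := by
  refine LieHom.prod_ext _ _ _ (hom_ext ?_ ?_) (hom_ext ?_ ?_) <;>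
    simp [ofHeisenbergProd, LieHom.inl_apply, LieHom.inr_apply, toHeisenbergProd_π₁_of,
      heisenbergGens]

noncomputable def equivHeisenbergProd : K₁ R ≃ₗ⁅R⁆ Heisenberg R × Heisenberg R :=
  { toHeisenbergProd R with
    invFun := ofHeisenbergProd R
    left_inv := LieHom.congr_fun (ofHeisenbergProd_comp_toHeisenbergProd R)
    right_inv := LieHom.congr_fun (toHeisenbergProd_comp_ofHeisenbergProd R) }

lemma equivHeisenbergProd_π₁_of (i : Fin 4) :
    equivHeisenbergProd R (π₁ R (of R i)) = heisenbergGens R i :=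
  toHeisenbergProd_π₁_of R i

end K₁

theorem exists_five_dimensional_centralizer_general
    {k : Type*} [Field k] :
    let L := FreeLieAlgebra k (Fin 4)
    let x : Fin 4 → L := FreeLieAlgebra.of k
    let r1 : LieIdeal k L := LieSubmodule.lieSpan k L
      {⁅x 0, x 2⁆, ⁅x 0, x 3⁆, ⁅x 1, x 2⁆, ⁅x 1, x 3⁆}
    ∃ v : (L ⧸ r1) ⧸ LieModule.lowerCentralSeries k (L ⧸ r1) (L ⧸ r1) 2, v ≠ 0 ∧
      Module.finrank k
        (LinearMap.ker (LieAlgebra.ad k ((L ⧸ r1) ⧸ LieModule.lowerCentralSeries k (L ⧸ r1) (L ⧸ r1) 2) v)) = 5 := by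
  show ∃ v : K₁ k, v ≠ 0 ∧ Module.finrank k (LinearMap.ker (LieAlgebra.ad k (K₁ k) v)) = 5
  have hv := equivHeisenbergProd_π₁_of k 0
  refine ⟨π₁ k (of k 0), fun h => ?_, ?_⟩
  · rw [h, map_zero] at hv
    exact Heisenberg.X_ne_zero (congrArg Prod.fst hv).symm
  · rw [← LieEquiv.finrank_ker_ad (equivHeisenbergProd k), hv]
    exact Heisenberg.finrank_ker_ad_inl_X k

/-- let `k` be a field of odd characteristic and `g ∈ k×` a non-square.
Let `K₁` be the class-2 quotient of `L/(x₁₃, x₁₄, x₂₃, x₂₄)`, `L` free on `x₁,…,x₄`.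
Then `K₁` contains a nonzero element whose centralizer has `k`-dimension `5`. -/
theorem exists_five_dimensional_centralizer
    {k : Type*} [Field k] (hodd : Odd (ringChar k))
    (g : k) (hg : g ≠ 0) (hns : ∀ x : k, x ^ 2 ≠ g) :
    let L := FreeLieAlgebra k (Fin 4)
    let x : Fin 4 → L := FreeLieAlgebra.of k
    let r1 : LieIdeal k L := LieSubmodule.lieSpan k L
      {⁅x 0, x 2⁆, ⁅x 0, x 3⁆, ⁅x 1, x 2⁆, ⁅x 1, x 3⁆}
    ∃ v : (L ⧸ r1) ⧸ LieModule.lowerCentralSeries k (L ⧸ r1) (L ⧸ r1) 2, v ≠ 0 ∧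
      Module.finrank k
        (LinearMap.ker (LieAlgebra.ad k ((L ⧸ r1) ⧸ LieModule.lowerCentralSeries k (L ⧸ r1) (L ⧸ r1) 2) v)) = 5 :=
  exists_five_dimensional_centralizer_general
end

section
/- Let k be a field, g ∈ k× a non-square, and let V = k⁴ with the two alternating bilinear forms B₁(a,b) = a₁b₃ + g⁻¹a₂b₄ − a₃b₁ − g⁻¹a₄b₂ and B₂(a,b) = a₁b₄ + a₂b₃ − a₃b₂ − a₄b₁. Then for every nonzero a ∈ V, the linear functionals B₁(a,−) and B₂(a,−) on V are linearly independent; equivalently, dim{b ∈ V : B₁(a,b) = B₂(a,b) = 0} = 2 for all nonzero a. -/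
/-!
For `s, t` not both zero, `s M₁ + t M₂ = [[0, B], [-Bᵀ, 0]]` with `B = [[s, t], [t, s g⁻¹]]`, so its
determinant is `(det B)² = g⁻² (s² - g t²)²`, which vanishes only if `g` is a square. Hence
`s • aM₁ + t • aM₂ = a (s M₁ + t M₂)` vanishes only for `a = 0`, i.e. the two functionals are
independent; the dimension of their common kernel then follows from rank–nullity.
-/

open Matrix Module

namespace Matrix

variable {m n R : Type*}

theorem linearIndependent_vecMul_pair [Fintype n] [DecidableEq n] [CommRing R] [IsDomain R]
    {M₁ M₂ : Matrix n n R} (hpencil : ∀ s t : R, (s, t) ≠ 0 → (s • M₁ + t • M₂).det ≠ 0)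
    {a : n → R} (ha : a ≠ 0) : LinearIndependent R ![a ᵥ* M₁, a ᵥ* M₂] := by
  refine LinearIndependent.pair_iff.mpr fun s t hst => ?_
  by_contra hne
  have hvec : a ᵥ* (s • M₁ + t • M₂) = 0 := by
    rwa [vecMul_add, vecMul_smul, vecMul_smul]
  exact hpencil s t (by simpa using hne) (exists_vecMul_eq_zero_iff.mp ⟨a, ha, hvec⟩)

theorem finrank_ker_mulVecLin_of_linearIndependent_row [Fintype m] [Fintype n] [Field R]
    {A : Matrix m n R} (h : LinearIndependent R A.row) :
    finrank R (LinearMap.ker A.mulVecLin) = Fintype.card n - Fintype.card m := by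
  have hrank : finrank R (LinearMap.range A.mulVecLin) = Fintype.card m := h.rank_matrix
  have := LinearMap.finrank_range_add_finrank_ker A.mulVecLin
  rw [finrank_fintype_fun_eq_card, hrank] at this
  omega

end Matrix

theorem sq_sub_mul_sq_ne_zero {k : Type*} [Field k] {g : k} (hns : ∀ x : k, x ^ 2 ≠ g)
    {s t : k} (hst : (s, t) ≠ 0) : s ^ 2 - g * t ^ 2 ≠ 0 := by
  intro h
  by_cases ht : t = 0
  · subst ht
    exact hst (by simpa using h)
  · exact hns (s / t) (by field_simp; linear_combination h)

theorem det_smul_add_smul_pencil {k : Type*} [Field k] (g s t : k) :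
    (s • !![(0 : k),0,1,0; 0,0,0,g⁻¹; -1,0,0,0; 0,-g⁻¹,0,0]
      + t • !![(0 : k),0,0,1; 0,0,1,0; 0,-1,0,0; -1,0,0,0]).det = (s ^ 2 * g⁻¹ - t ^ 2) ^ 2 := by
  simp [det_succ_row_zero, Fin.sum_univ_succ, Fin.succAbove]
  ring

theorem pencil_functionals_independent_general
    {k : Type*} [Field k]
    (g : k) (hg : g ≠ 0) (hns : ∀ x : k, x ^ 2 ≠ g) :
    let M₁ : Matrix (Fin 4) (Fin 4) k :=
      !![0,0,1,0; 0,0,0,g⁻¹; -1,0,0,0; 0,-g⁻¹,0,0]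
    let M₂ : Matrix (Fin 4) (Fin 4) k :=
      !![0,0,0,1; 0,0,1,0; 0,-1,0,0; -1,0,0,0]
    ∀ a : Fin 4 → k, a ≠ 0 →
      LinearIndependent k ![Matrix.vecMul a M₁, Matrix.vecMul a M₂] ∧
      Module.finrank k
        (LinearMap.ker ((Matrix.of ![Matrix.vecMul a M₁, Matrix.vecMul a M₂] :
          Matrix (Fin 2) (Fin 4) k).mulVecLin)) = 2 := by
  intro M₁ M₂ a ha
  have hpencil : ∀ s t : k, (s, t) ≠ 0 → (s • M₁ + t • M₂).det ≠ 0 := fun s t hst => by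
    have hfactor : s ^ 2 * g⁻¹ - t ^ 2 = g⁻¹ * (s ^ 2 - g * t ^ 2) := by field_simp
    rw [det_smul_add_smul_pencil, hfactor]
    exact pow_ne_zero 2 (mul_ne_zero (inv_ne_zero hg) (sq_sub_mul_sq_ne_zero hns hst))
  have hli := linearIndependent_vecMul_pair hpencil ha
  exact ⟨hli, finrank_ker_mulVecLin_of_linearIndependent_row hli⟩

/-- let `k` be a field of characteristic `≠ 2` and `g ∈ k×` a
non-square.  With the alternating forms `B₁, B₂` on `k⁴` given by the matrices
`M₁ = [[0,0,1,0],[0,0,0,g⁻¹],[−1,0,0,0],[0,−g⁻¹,0,0]]` and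
`M₂ = [[0,0,0,1],[0,0,1,0],[0,−1,0,0],[−1,0,0,0]]`, for every nonzero `a ∈ k⁴`
the functionals `B₁(a,−) = (aM₁)·(−)` and `B₂(a,−) = (aM₂)·(−)` are linearly
independent; equivalently, `dim {b : B₁(a,b) = B₂(a,b) = 0} = 2`. -/
theorem pencil_functionals_independent
    {k : Type*} [Field k] (hchar : ringChar k ≠ 2)
    (g : k) (hg : g ≠ 0) (hns : ∀ x : k, x ^ 2 ≠ g) :
    let M₁ : Matrix (Fin 4) (Fin 4) k :=
      !![0,0,1,0; 0,0,0,g⁻¹; -1,0,0,0; 0,-g⁻¹,0,0]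
    let M₂ : Matrix (Fin 4) (Fin 4) k :=
      !![0,0,0,1; 0,0,1,0; 0,-1,0,0; -1,0,0,0]
    ∀ a : Fin 4 → k, a ≠ 0 →
      LinearIndependent k ![Matrix.vecMul a M₁, Matrix.vecMul a M₂] ∧
      Module.finrank k
        (LinearMap.ker ((Matrix.of ![Matrix.vecMul a M₁, Matrix.vecMul a M₂] :
          Matrix (Fin 2) (Fin 4) k).mulVecLin)) = 2 :=
  pencil_functionals_independent_general g hg hns
end
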